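/- arXiv:2501.16170 — 3 statements merged into one kernel-verified Lean document; each statement's English description precedes it below -/
import Mathlib

section
/- Let G be a connected graph and let {A₁,A₂} and {C₁,C₂} be separations of G with separators X := A₁∩A₂ and Y := C₁∩C₂. Then the following are equivalent: (i) {A₁,A₂} and {C₁,C₂} cross; (ii) for every pair of indices i,j ∈ {1,2}, at least one of the following three sets is non-empty: the Y-link for A_i, the X-link for C_j, and (A_i∖A_{3−i})∩(C_j∖C_{3−j}); (iii) for every pair of indices i,j ∈ {1,2}, at least one of the following three sets is non-empty: the Y-link for A_i, the X-link for C_j, and the set E(X∩Y, (A_i∖A_{3−i})∩(C_j∖C_{3−j})) of edges of G with one end in X∩Y and the other in (A_i∖A_{3−i})∩(C_j∖C_{3−j}). Moreover, (ii) and (iii) are violated for a pair of indices i,j ∈ {1,2} if and only if (A_i,A_{3−i}) ≥ (C_{3−j},C_j). -/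
namespace LS

open SimpleGraph

variable {V : Type*}

/-- `(A, B)` is an (oriented) separation of `G`: the two sides cover `V`
and there is no edge between `A ∖ B` and `B ∖ A`. -/
def IsSep (G : SimpleGraph V) (A B : Set V) : Prop :=
  A ∪ B = Set.univ ∧ ∀ a ∈ A \ B, ∀ b ∈ B \ A, ¬G.Adj a b

/-- `(A,B) ≥ (C,D)` for oriented separations, i.e. `A ⊆ C` and `B ⊇ D`. -/
def SepGE (s t : Set V × Set V) : Prop := s.1 ⊆ t.1 ∧ t.2 ⊆ s.2

/-- Two (unoriented) separations are nested if they have `≥`-comparable orientations. -/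
def Nested (s t : Set V × Set V) : Prop :=
  SepGE s t ∨ SepGE s (t.2, t.1) ∨ SepGE (s.2, s.1) t ∨ SepGE (s.2, s.1) (t.2, t.1)

/-- Two separations cross if they are not nested. -/
def Crosses (s t : Set V × Set V) : Prop := ¬Nested s t

/-- The neighbourhood `N_G(K)` of a vertex set `K`. -/
def nbhdSet (G : SimpleGraph V) (K : Set V) : Set V :=
  {v | v ∉ K ∧ ∃ u ∈ K, G.Adj u v}

/-- `K` is (the vertex set of) a connected component of the subgraph of `G` induced on `S`. -/
def IsCompOf (G : SimpleGraph V) (K S : Set V) : Prop :=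
  K.Nonempty ∧ K ⊆ S ∧ (G.induce K).Connected ∧ ∀ a ∈ K, ∀ b ∈ S, G.Adj a b → b ∈ K

/-- `K` is a component of `G − X` that is tight at `X`, i.e. `N_G(K) = X`. -/
def TightCompAt (G : SimpleGraph V) (K X : Set V) : Prop :=
  IsCompOf G K Xᶜ ∧ nbhdSet G K = X

/-- A separation `{A,B}` is tight if `G − (A ∩ B)` has tight components
contained in `A` and in `B`, respectively. -/
def TightSep (G : SimpleGraph V) (A B : Set V) : Prop :=
  (∃ K, TightCompAt G K (A ∩ B) ∧ K ⊆ A) ∧ ∃ K, TightCompAt G K (A ∩ B) ∧ K ⊆ B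

/-- `X` is a tight separator: `G − X` has at least two components tight at `X`. -/
def TightSeparator (G : SimpleGraph V) (X : Set V) : Prop :=
  ∃ K₁ K₂, K₁ ≠ K₂ ∧ TightCompAt G K₁ X ∧ TightCompAt G K₂ X

/-- The set `E_G(S,T)` of edges of `G` with one end in `S` and the other in `T`. -/
def edgesBetween (G : SimpleGraph V) (S T : Set V) : Set (Sym2 V) :=
  {e | ∃ u v, G.Adj u v ∧ e = s(u, v) ∧ u ∈ S ∧ v ∈ T}

/-- `∂X`: the set of edges of `G` with exactly one end in `X`. -/
def edgeBdry (G : SimpleGraph V) (X : Set V) : Set (Sym2 V) :=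
  {e | ∃ u v, G.Adj u v ∧ e = s(u, v) ∧ u ∈ X ∧ v ∉ X}

/-- The separator of an oriented separation. -/
def tsSep (s : Set V × Set V) : Set V := s.1 ∩ s.2

/-- `p` lists the three distinct oriented separations of a ⊤-star. -/
def IsTStar (G : SimpleGraph V) (p : Fin 3 → Set V × Set V) : Prop :=
  Function.Injective p ∧ (∀ i, IsSep G (p i).1 (p i).2) ∧
  (∀ i j, i ≠ j → Disjoint ((p i).1 \ (p i).2) ((p j).1 \ (p j).2)) ∧
  (⋃ i, ((p i).1 \ (p i).2)) = (⋃ i, tsSep (p i))ᶜ ∧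
  ∀ i, ∀ v ∈ tsSep (p i), ∃ j, j ≠ i ∧ v ∈ tsSep (p j)

/-- The centre `Z` of a ⊤-star. -/
def tsCentre (p : Fin 3 → Set V × Set V) : Set V := ⋂ i, tsSep (p i)

/-- The `ij`-link `X_{ij}` of a ⊤-star. -/
def tsLink (p : Fin 3 → Set V × Set V) (i j : Fin 3) : Set V :=
  (tsSep (p i) ∩ tsSep (p j)) \ tsCentre p

/-- The ⊤-star `p` is relevant with base `p 0`. -/
def RelevantTStar (G : SimpleGraph V) (p : Fin 3 → Set V × Set V) : Prop :=
  IsTStar G p ∧ TightSep G (p 0).1 (p 0).2 ∧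
  ∀ x ∈ tsLink p 1 2, ∀ i : Fin 3, i ≠ 0 →
    (∃ y ∈ tsLink p 0 i, G.Adj x y) ∨
    ∃ y ∈ tsLink p 0 i ∪ tsCentre p, ∃ K, IsCompOf G K ((p i).1 \ (p i).2) ∧
      x ∈ nbhdSet G K ∧ y ∈ nbhdSet G K

/-- A bottleneck of order `k` in `G`, encoded as a set of oriented separations
closed under reversal (representing a set of unoriented separations). -/
def IsBottleneck (G : SimpleGraph V) (k : ℕ) (β : Set (Set V × Set V)) : Prop :=
  β.Nonempty ∧ (∀ s ∈ β, (s.2, s.1) ∈ β) ∧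
  (∀ s ∈ β, IsSep G s.1 s.2 ∧ TightSep G s.1 s.2 ∧ (s.1 ∩ s.2).encard = k) ∧
  ∀ p : Fin 3 → Set V × Set V, RelevantTStar G p →
    (∀ i, (tsSep (p i)).encard ≤ (k : ℕ∞)) → p 0 ∈ β → p 1 ∈ β ∨ p 2 ∈ β

/-! ### Tangles -/

/-- A tangle of order `ℓ` in `G`. -/
def IsTangle (G : SimpleGraph V) (ℓ : ℕ) (τ : Set (Set V × Set V)) : Prop :=
  (∀ s ∈ τ, IsSep G s.1 s.2 ∧ (s.1 ∩ s.2).encard < (ℓ : ℕ∞)) ∧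
  (∀ A B : Set V, IsSep G A B → (A ∩ B).encard < (ℓ : ℕ∞) → ((A, B) ∈ τ ∨ (B, A) ∈ τ)) ∧
  (∀ A B : Set V, (A, B) ∈ τ → (B, A) ∈ τ → A = B) ∧
  ∀ s₁ ∈ τ, ∀ s₂ ∈ τ, ∀ s₃ ∈ τ,
    ¬(s₁.1 ∪ s₂.1 ∪ s₃.1 = Set.univ ∧
      ∀ u v : V, G.Adj u v →
        (u ∈ s₁.1 ∧ v ∈ s₁.1) ∨ (u ∈ s₂.1 ∧ v ∈ s₂.1) ∨ (u ∈ s₃.1 ∧ v ∈ s₃.1))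

/-- The separation `{A,B}` distinguishes the tangles `τ` and `τ'`. -/
def DistinguishesT (τ τ' : Set (Set V × Set V)) (A B : Set V) : Prop :=
  ((A, B) ∈ τ ∧ (B, A) ∈ τ') ∨ ((B, A) ∈ τ ∧ (A, B) ∈ τ')

/-- The separation `{A,B}` distinguishes the vertex sets `Y` and `Z`. -/
def DistSets (Y Z A B : Set V) : Prop :=
  (Y ⊆ A ∧ (Y ∩ (A \ B)).Nonempty ∧ Z ⊆ B ∧ (Z ∩ (B \ A)).Nonempty) ∨
  (Y ⊆ B ∧ (Y ∩ (B \ A)).Nonempty ∧ Z ⊆ A ∧ (Z ∩ (A \ B)).Nonempty)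

/-! ### The construction of the nested sets `N^k(G)` -/

/-- `X^k`: the union of all `k`-bottlenecks in `G`. -/
def Xk (G : SimpleGraph V) (k : ℕ) : Set (Set V × Set V) :=
  {s | ∃ β, IsBottleneck G k β ∧ s ∈ β}

/-- `x^k(s)`: the number of separations in `X^k` that `s` crosses. -/
noncomputable def xk (G : SimpleGraph V) (k : ℕ) (s : Set V × Set V) : ℕ :=
  {t ∈ Xk G k | Crosses s t}.ncard

/-- `N^k(G,β)` relative to a previously constructed set `M` of separations:
the elements of `β` nested with `M` that minimise `x^k` among those. -/
def NkOfBeta (G : SimpleGraph V) (M : Set (Set V × Set V)) (k : ℕ)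
    (β : Set (Set V × Set V)) : Set (Set V × Set V) :=
  {s ∈ β | (∀ t ∈ M, Nested s t) ∧
    ∀ s' ∈ β, (∀ t ∈ M, Nested s' t) → xk G k s ≤ xk G k s'}

/-- `N^k(G)` relative to a previously constructed set `M`. -/
def NkStep (G : SimpleGraph V) (M : Set (Set V × Set V)) (k : ℕ) :
    Set (Set V × Set V) :=
  {s | ∃ β, IsBottleneck G k β ∧ s ∈ NkOfBeta G M k β}

/-- `N^{<k}(G) = ⋃_{j<k} N^j(G)`. -/
noncomputable def Nlt (G : SimpleGraph V) : ℕ → Set (Set V × Set V)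
  | 0 => ∅
  | k + 1 => Nlt G k ∪ NkStep G (Nlt G k) k

/-- `N^k(G)`. -/
noncomputable def Nk (G : SimpleGraph V) (k : ℕ) : Set (Set V × Set V) :=
  NkStep G (Nlt G k) k

/-- `N(G) = ⋃_k N^k(G)`. -/
noncomputable def NSet (G : SimpleGraph V) : Set (Set V × Set V) :=
  ⋃ k, Nk G k

/-! ### Walks, local components and local separations -/

/-- An `X`-walk: a walk having precisely its first and last vertex in `X`. -/
def IsXWalk (G : SimpleGraph V) (X : Set V) {u v : V} (W : G.Walk u v) : Prop :=
  u ∈ X ∧ v ∈ X ∧ ∀ w ∈ W.support, w ∈ X → w = u ∨ w = v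

/-- An `r`-local `X`-walk: an `X`-walk contained in a cycle of length `≤ r`,
or an `X`-walk consisting of a single `X`-edge. -/
def IsLocalXWalk (G : SimpleGraph V) (r : ℕ) (X : Set V) {u v : V} (W : G.Walk u v) :
    Prop :=
  IsXWalk G X W ∧
  ((∃ (a : V) (C : G.Walk a a), C.IsCycle ∧ C.length ≤ r ∧ ∀ e ∈ W.edges, e ∈ C.edges) ∨
    W.length = 1)

/-- An `r`-local `X`-path. -/
def IsLocalXPath (G : SimpleGraph V) (r : ℕ) (X : Set V) {u v : V} (W : G.Walk u v) :
    Prop :=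
  IsLocalXWalk G r X W ∧ W.IsPath

/-- Walks that are concatenations of `r`-local `X`-paths. -/
inductive ConcatLocalPaths (G : SimpleGraph V) (r : ℕ) (X : Set V) :
    ∀ {u v : V}, G.Walk u v → Prop
  | single {u v : V} (W : G.Walk u v) (h : IsLocalXPath G r X W) :
      ConcatLocalPaths G r X W
  | comp {u v w : V} (W₁ : G.Walk u v) (W₂ : G.Walk v w)
      (h₁ : IsLocalXPath G r X W₁) (h₂ : ConcatLocalPaths G r X W₂) :
      ConcatLocalPaths G r X (W₁.append W₂)

/-- `W ∈ W_r(X)`: `W` is a concatenation of `r`-local `X`-paths repeating no vertex of `X`. -/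
def MemWr (G : SimpleGraph V) (r : ℕ) (X : Set V) {u v : V} (W : G.Walk u v) : Prop :=
  ConcatLocalPaths G r X W ∧ ∀ x ∈ X, ¬W.support.Duplicate x

/-- `X` is `r`-tomic: any two of its vertices are joined by a walk in `W_r(X)`. -/
def Rtomic (G : SimpleGraph V) (r : ℕ) (X : Set V) : Prop :=
  ∀ x ∈ X, ∀ y ∈ X, x ≠ y → ∃ W : G.Walk x y, MemWr G r X W

/-- One step of the relation generating the `r`-local components at `X`:
`e = f`, or `e` and `f` are the first and last edges of an `r`-local `X`-walk
(both required to lie in `∂X`). -/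
def LocalEdgeStep (G : SimpleGraph V) (r : ℕ) (X : Set V) (e f : Sym2 V) : Prop :=
  e ∈ edgeBdry G X ∧ f ∈ edgeBdry G X ∧
  (e = f ∨ ∃ (u v : V) (W : G.Walk u v), IsLocalXWalk G r X W ∧
      W.edges.head? = some e ∧ W.edges.getLast? = some f)

/-- `F` is an `r`-local component at `X`: an equivalence class of the transitive
closure of `LocalEdgeStep` on `∂X`. -/
def LocalCompAt (G : SimpleGraph V) (r : ℕ) (X : Set V) (F : Set (Sym2 V)) : Prop :=
  ∃ e ∈ edgeBdry G X, F = {f | Relation.ReflTransGen (LocalEdgeStep G r X) e f}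

/-- An edge set `F` is tight with respect to `X` if every vertex of `X`
is incident with an edge of `F`. -/
def TightLocalComp (X : Set V) (F : Set (Sym2 V)) : Prop :=
  ∀ x ∈ X, ∃ e ∈ F, x ∈ e

/-- `X` is a tight `r`-local separator: at least two tight `r`-local components at `X`. -/
def TightLocalSeparator (G : SimpleGraph V) (r : ℕ) (X : Set V) : Prop :=
  ∃ F₁ F₂, F₁ ≠ F₂ ∧ LocalCompAt G r X F₁ ∧ LocalCompAt G r X F₂ ∧
    TightLocalComp X F₁ ∧ TightLocalComp X F₂

/-- `(E₁, X, E₂)` is an (oriented) `r`-local separation of `G`. -/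
def IsLocalSep (G : SimpleGraph V) (r : ℕ) (E₁ : Set (Sym2 V)) (X : Set V)
    (E₂ : Set (Sym2 V)) : Prop :=
  Disjoint E₁ E₂ ∧ E₁ ∪ E₂ = edgeBdry G X ∧
    ∀ F, LocalCompAt G r X F → F ⊆ E₁ ∨ F ⊆ E₂

/-- A tight `r`-local separation: each side includes a tight `r`-local component at `X`. -/
def TightLocalSep (G : SimpleGraph V) (r : ℕ) (E₁ : Set (Sym2 V)) (X : Set V)
    (E₂ : Set (Sym2 V)) : Prop :=
  IsLocalSep G r E₁ X E₂ ∧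
  (∃ F, LocalCompAt G r X F ∧ TightLocalComp X F ∧ F ⊆ E₁) ∧
  ∃ F, LocalCompAt G r X F ∧ TightLocalComp X F ∧ F ⊆ E₂

/-- The oriented `r`-local separation `s_r` induced by the oriented separation
`s = (A₁, A₂)`: its separator is `X = A₁ ∩ A₂`, and its sides are
`E_i = E_G(A_i ∖ X, X)`. -/
def inducedLocal (G : SimpleGraph V) (s : Set V × Set V) :
    Set (Sym2 V) × Set V × Set (Sym2 V) :=
  (edgesBetween G (s.1 \ (s.1 ∩ s.2)) (s.1 ∩ s.2), s.1 ∩ s.2,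
    edgesBetween G (s.2 \ (s.1 ∩ s.2)) (s.1 ∩ s.2))

/-- Some cycle of `G` of length `≤ r` alternates between the disjoint sets `X` and `Y`:
it visits four distinct vertices `x, y, x', y'` in this cyclic order with
`x, x' ∈ X` and `y, y' ∈ Y`. -/
def Alternates (G : SimpleGraph V) (r : ℕ) (X Y : Set V) : Prop :=
  ∃ (a : V) (C : G.Walk a a), C.IsCycle ∧ C.length ≤ r ∧
    ∃ (x y x' y' : V) (l₁ l₂ l₃ l₄ l₅ : List V),
      x ∈ X ∧ x' ∈ X ∧ y ∈ Y ∧ y' ∈ Y ∧ x ≠ x' ∧ y ≠ y' ∧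
      C.support = l₁ ++ x :: l₂ ++ y :: l₃ ++ x' :: l₄ ++ y' :: l₅

/-- `X` and `Y` are `r`-coupled. -/
def RCoupled (G : SimpleGraph V) (r : ℕ) (X Y : Set V) : Prop :=
  (X ∩ Y).Nonempty ∨ (Disjoint X Y ∧ Alternates G r X Y)

/-- The `X`-link for the side `Fi` of an `r`-local separation with separator `Y`:
vertices `x ∈ X ∖ Y` from which some walk in `W_r(X)` visits `Y` with its first
edge in `∂Y` lying in `Fi`. -/
def LocalLink (G : SimpleGraph V) (r : ℕ) (X Y : Set V) (Fi : Set (Sym2 V)) : Set V :=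
  {x | x ∈ X \ Y ∧ ∃ (z : V) (W : G.Walk x z), MemWr G r X W ∧
      (∃ y ∈ Y, y ∈ W.support) ∧
      ∃ (e : Sym2 V) (l₁ l₂ : List (Sym2 V)), W.edges = l₁ ++ e :: l₂ ∧
        e ∈ edgeBdry G Y ∧ e ∈ Fi ∧ ∀ e' ∈ l₁, e' ∉ edgeBdry G Y}

/-- The `r`-local separations `{E₁,X,E₂}` and `{F₁,Y,F₂}` cross. -/
def LocalCrosses (G : SimpleGraph V) (r : ℕ) (E₁ : Set (Sym2 V)) (X : Set V)
    (E₂ : Set (Sym2 V)) (F₁ : Set (Sym2 V)) (Y : Set V) (F₂ : Set (Sym2 V)) : Prop :=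
  RCoupled G r X Y ∧ ∀ i j : Bool,
    (LocalLink G r X Y (cond j F₁ F₂)).Nonempty ∨
    (LocalLink G r Y X (cond i E₁ E₂)).Nonempty ∨
    ((cond i E₁ E₂) ∩ (cond j F₁ F₂) ∩ edgeBdry G (X ∩ Y)).Nonempty

/-- The edge set of a walk, as a set. -/
def walkEdgeSet {G : SimpleGraph V} {a b : V} (W : G.Walk a b) : Set (Sym2 V) :=
  {e | e ∈ W.edges}

/-- The binary cycle space of `G` is generated by the cycles of length `≤ r`:
the edge set of every cycle is a symmetric difference of edge sets of cycles
of length `≤ r`. -/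
def CycleSpaceGenShort (G : SimpleGraph V) (r : ℕ) : Prop :=
  ∀ ⦃a : V⦄ (C : G.Walk a a), C.IsCycle →
    ∃ L : List ((b : V) × G.Walk b b),
      (∀ p ∈ L, p.2.IsCycle ∧ p.2.length ≤ r) ∧
      walkEdgeSet C = L.foldr (fun p E => symmDiff (walkEdgeSet p.2) E) ∅

/-! ### Local ⊤-stars and local bottlenecks -/

/-- `q` lists the three oriented `r`-local separations of an `r`-local ⊤-star. -/
def IsLocalTStar (G : SimpleGraph V) (r : ℕ)
    (q : Fin 3 → Set (Sym2 V) × Set V × Set (Sym2 V)) : Prop :=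
  Function.Injective q ∧
  (∀ i, IsLocalSep G r (q i).1 (q i).2.1 (q i).2.2) ∧
  (∀ i j, i ≠ j → Disjoint (q i).1 (q j).1) ∧
  (⋃ i, (q i).1) = edgeBdry G (⋃ i, (q i).2.1) ∧
  (∀ i, ∀ v ∈ (q i).2.1, ∃ j, j ≠ i ∧ v ∈ (q j).2.1) ∧
  ∀ F, LocalCompAt G r (⋃ i, (q i).2.1) F → ∃ i, F ⊆ (q i).1

/-- The `r`-local ⊤-star `q` is relevant with base `q 0`. -/
def RelevantLocalTStar (G : SimpleGraph V) (r : ℕ)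
    (q : Fin 3 → Set (Sym2 V) × Set V × Set (Sym2 V)) : Prop :=
  IsLocalTStar G r q ∧ TightLocalSep G r (q 0).1 (q 0).2.1 (q 0).2.2 ∧
  ∀ x ∈ ((q 1).2.1 ∩ (q 2).2.1) \ ⋂ j, (q j).2.1, ∀ i : Fin 3, i ≠ 0 →
    (∃ y ∈ ((q 0).2.1 ∩ (q i).2.1) \ ⋂ j, (q j).2.1, G.Adj x y) ∨
    ∃ F, LocalCompAt G r (⋃ j, (q j).2.1) F ∧ F ⊆ (q i).1 ∧
      (∃ e ∈ F, x ∈ e) ∧ ∃ e ∈ F, ∃ y ∈ (q 0).2.1 ∩ (q i).2.1, y ∈ e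

/-- An `r`-local bottleneck of order `k` in `G`, encoded as a set of oriented
`r`-local separations closed under reversal. -/
def IsLocalBottleneck (G : SimpleGraph V) (r k : ℕ)
    (β : Set (Set (Sym2 V) × Set V × Set (Sym2 V))) : Prop :=
  β.Nonempty ∧ (∀ q ∈ β, (q.2.2, q.2.1, q.1) ∈ β) ∧
  (∀ q ∈ β, TightLocalSep G r q.1 q.2.1 q.2.2 ∧ q.2.1.encard = (k : ℕ∞)) ∧
  ∀ p : Fin 3 → Set (Sym2 V) × Set V × Set (Sym2 V), RelevantLocalTStar G r p →
    (∀ i, ((p i).2.1).encard ≤ (k : ℕ∞)) → p 0 ∈ β → p 1 ∈ β ∨ p 2 ∈ β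

lemma cover_of_union_univ {V : Type*} {A B : Set V} (h : A ∪ B = Set.univ) (v : V) :
    v ∈ A ∨ v ∈ B := by
  have hv := Set.mem_univ v
  rw [← h] at hv
  exact hv

lemma inter_bang {V : Type*} {A : Bool → Set V} (i : Bool) :
    A i ∩ A (!i) = A true ∩ A false := by
  cases i <;> simp [Set.inter_comm]

lemma cover_bang {V : Type*} {G : SimpleGraph V} {A : Bool → Set V}
    (h : IsSep G (A true) (A false)) (i : Bool) (v : V) : v ∈ A i ∨ v ∈ A (!i) := by
  have := cover_of_union_univ h.1 v
  cases i
  · exact this.symm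
  · exact this

lemma sep_bang {V : Type*} {G : SimpleGraph V} {A : Bool → Set V}
    (h : IsSep G (A true) (A false)) (i : Bool) :
    ∀ a ∈ A i \ A (!i), ∀ b ∈ A (!i) \ A i, ¬G.Adj a b := by
  cases i
  · exact fun a ha b hb hadj => h.2 b hb a ha hadj.symm
  · exact h.2

/-- Any neighbour of a vertex strictly inside `A i` lies in `A i`. -/
lemma adj_mem_side {V : Type*} {G : SimpleGraph V} {A : Bool → Set V}
    (h : IsSep G (A true) (A false)) (i : Bool) {a b : V}
    (ha : a ∈ A i \ A (!i)) (hadj : G.Adj a b) : b ∈ A i := by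
  by_contra hb
  have hb' : b ∈ A (!i) := (cover_bang h i b).resolve_left hb
  exact sep_bang h i a ha b ⟨hb', hb⟩ hadj

lemma nested_of {V : Type*} {A C : Bool → Set V} (i j : Bool)
    (h1 : A i ⊆ C (!j)) (h2 : C j ⊆ A (!i)) :
    Nested (A true, A false) (C true, C false) := by
  cases i <;> cases j
  · exact Or.inr (Or.inr (Or.inl ⟨h1, h2⟩))
  · exact Or.inr (Or.inr (Or.inr ⟨h1, h2⟩))
  · exact Or.inl ⟨h1, h2⟩
  · exact Or.inr (Or.inl ⟨h1, h2⟩)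

lemma nested_iff' {V : Type*} {A C : Bool → Set V} :
    Nested (A true, A false) (C true, C false) ↔
      ∃ i j : Bool, A i ⊆ C (!j) ∧ C j ⊆ A (!i) := by
  constructor
  · rintro (⟨h1, h2⟩ | ⟨h1, h2⟩ | ⟨h1, h2⟩ | ⟨h1, h2⟩)
    exacts [⟨true, false, h1, h2⟩, ⟨true, true, h1, h2⟩,
      ⟨false, false, h1, h2⟩, ⟨false, true, h1, h2⟩]
  · rintro ⟨i, j, h1, h2⟩
    exact nested_of i j h1 h2

/-- Violation of (ii) at `(i,j)` is equivalent to `(A_i,A_{¬i}) ≥ (C_{¬j},C_j)`. -/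
lemma violII_iff {V : Type*} {G : SimpleGraph V} {A C : Bool → Set V}
    (hA : IsSep G (A true) (A false)) (hC : IsSep G (C true) (C false)) (i j : Bool) :
    ((C true ∩ C false) \ A (!i) = ∅ ∧ (A true ∩ A false) \ C (!j) = ∅ ∧
      (A i \ A (!i)) ∩ (C j \ C (!j)) = ∅) ↔ (A i ⊆ C (!j) ∧ C j ⊆ A (!i)) := by
  constructor
  · rintro ⟨h1, h2, h3⟩
    have hY : C true ∩ C false ⊆ A (!i) := Set.diff_eq_empty.mp h1
    have hX : A true ∩ A false ⊆ C (!j) := Set.diff_eq_empty.mp h2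
    constructor
    · intro a ha
      by_cases ha' : a ∈ A (!i)
      · exact hX (by rw [← inter_bang i]; exact ⟨ha, ha'⟩)
      · by_contra hc
        have hcj : a ∈ C j := (cover_bang hC j a).resolve_right hc
        have : a ∈ (A i \ A (!i)) ∩ (C j \ C (!j)) := ⟨⟨ha, ha'⟩, hcj, hc⟩
        rw [h3] at this
        exact this
    · intro c hc
      by_cases hc' : c ∈ C (!j)
      · exact hY (by rw [← inter_bang j]; exact ⟨hc, hc'⟩)
      · by_contra ha
        have hai : c ∈ A i := (cover_bang hA i c).resolve_right ha
        have : c ∈ (A i \ A (!i)) ∩ (C j \ C (!j)) := ⟨⟨hai, ha⟩, hc, hc'⟩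
        rw [h3] at this
        exact this
  · rintro ⟨h1, h2⟩
    have hYj : C true ∩ C false ⊆ C j := by
      cases j
      · exact Set.inter_subset_right
      · exact Set.inter_subset_left
    have hXi : A true ∩ A false ⊆ A i := by
      cases i
      · exact Set.inter_subset_right
      · exact Set.inter_subset_left
    refine ⟨Set.diff_eq_empty.mpr (hYj.trans h2), Set.diff_eq_empty.mpr (hXi.trans h1), ?_⟩
    apply Set.eq_empty_iff_forall_notMem.mpr
    rintro v ⟨⟨hv1, _⟩, _, hv4⟩
    exact hv4 (h1 hv1)

/-- Violation of (iii) at `(i,j)` implies nestedness (uses connectivity). -/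
lemma violIII_nested {V : Type*} {G : SimpleGraph V} (hG : G.Connected)
    {A C : Bool → Set V}
    (hA : IsSep G (A true) (A false)) (hC : IsSep G (C true) (C false)) (i j : Bool)
    (h1 : (C true ∩ C false) \ A (!i) = ∅) (h2 : (A true ∩ A false) \ C (!j) = ∅)
    (h3 : edgesBetween G ((A true ∩ A false) ∩ (C true ∩ C false))
            ((A i \ A (!i)) ∩ (C j \ C (!j))) = ∅) :
    Nested (A true, A false) (C true, C false) := by
  set D := (A i \ A (!i)) ∩ (C j \ C (!j)) with hD
  have hY : C true ∩ C false ⊆ A (!i) := Set.diff_eq_empty.mp h1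
  have hX : A true ∩ A false ⊆ C (!j) := Set.diff_eq_empty.mp h2
  have hE : ∀ u ∈ (A true ∩ A false) ∩ (C true ∩ C false), ∀ v ∈ D, ¬G.Adj u v := by
    intro u hu v hv hadj
    have : s(u, v) ∈ edgesBetween G ((A true ∩ A false) ∩ (C true ∩ C false)) D :=
      ⟨u, v, hadj, rfl, hu, hv⟩
    rw [h3] at this
    exact this
  have hclose : ∀ d ∈ D, ∀ b, G.Adj d b → b ∈ D := by
    intro d hd b hadj
    have hbA : b ∈ A i := adj_mem_side hA i hd.1 hadj
    have hbC : b ∈ C j := adj_mem_side hC j hd.2 hadj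
    by_contra hb
    have hcase : b ∈ A (!i) ∨ b ∈ C (!j) := by
      by_contra hcc
      push_neg at hcc
      exact hb ⟨⟨hbA, hcc.1⟩, hbC, hcc.2⟩
    have hbXY : b ∈ (A true ∩ A false) ∩ (C true ∩ C false) := by
      rcases hcase with hba | hbc
      · have hbx : b ∈ A true ∩ A false := by rw [← inter_bang i]; exact ⟨hbA, hba⟩
        have hbc' : b ∈ C (!j) := hX hbx
        exact ⟨hbx, by rw [← inter_bang j]; exact ⟨hbC, hbc'⟩⟩
      · have hby : b ∈ C true ∩ C false := by rw [← inter_bang j]; exact ⟨hbC, hbc⟩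
        have hba' : b ∈ A (!i) := hY hby
        exact ⟨by rw [← inter_bang i]; exact ⟨hbA, hba'⟩, hby⟩
    exact hE b hbXY d hd hadj.symm
  rcases Set.eq_empty_or_nonempty D with hDe | ⟨d, hd⟩
  · have h := (violII_iff hA hC i j).mp ⟨h1, h2, hDe⟩
    exact nested_of i j h.1 h.2
  · have hall : ∀ v, v ∈ D := by
      have hw : ∀ {x y : V} (w : G.Walk x y), x ∈ D → y ∈ D := by
        intro x y w
        induction w with
        | nil => exact id
        | cons h p ih => exact fun hx => ih (hclose _ hx _ h)
      intro v
      exact (hG.preconnected d v).elim fun w => hw w hd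
    have hA' : A (!i) = ∅ :=
      Set.eq_empty_iff_forall_notMem.mpr fun a ha => (hall a).1.2 ha
    have hC' : C (!j) = ∅ :=
      Set.eq_empty_iff_forall_notMem.mpr fun c hc => (hall c).2.2 hc
    apply nested_of (!i) (!j)
    · rw [hA']; exact Set.empty_subset _
    · rw [hC']; exact Set.empty_subset _

/-- Characterisation of crossing via links, with the
`moreover`-part relating violation of (ii)/(iii) to the partial order `≥`. -/
theorem statement0 {V : Type*} (G : SimpleGraph V) (hG : G.Connected)
    (A C : Bool → Set V)
    (hA : IsSep G (A true) (A false)) (hC : IsSep G (C true) (C false)) :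
    (Crosses (A true, A false) (C true, C false) ↔
      ∀ i j : Bool,
        ((C true ∩ C false) \ A (!i)).Nonempty ∨
        ((A true ∩ A false) \ C (!j)).Nonempty ∨
        ((A i \ A (!i)) ∩ (C j \ C (!j))).Nonempty) ∧
    (Crosses (A true, A false) (C true, C false) ↔
      ∀ i j : Bool,
        ((C true ∩ C false) \ A (!i)).Nonempty ∨
        ((A true ∩ A false) \ C (!j)).Nonempty ∨
        (edgesBetween G ((A true ∩ A false) ∩ (C true ∩ C false))
          ((A i \ A (!i)) ∩ (C j \ C (!j)))).Nonempty) ∧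
    ∀ i j : Bool,
      ((¬(((C true ∩ C false) \ A (!i)).Nonempty ∨
          ((A true ∩ A false) \ C (!j)).Nonempty ∨
          ((A i \ A (!i)) ∩ (C j \ C (!j))).Nonempty) ∧
        ¬(((C true ∩ C false) \ A (!i)).Nonempty ∨
          ((A true ∩ A false) \ C (!j)).Nonempty ∨
          (edgesBetween G ((A true ∩ A false) ∩ (C true ∩ C false))
            ((A i \ A (!i)) ∩ (C j \ C (!j)))).Nonempty)) ↔
        (A i ⊆ C (!j) ∧ C j ⊆ A (!i))) := by
  have key := fun i j => violII_iff hA hC i j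
  have part1 : Crosses (A true, A false) (C true, C false) ↔
      ∀ i j : Bool,
        ((C true ∩ C false) \ A (!i)).Nonempty ∨
        ((A true ∩ A false) \ C (!j)).Nonempty ∨
        ((A i \ A (!i)) ∩ (C j \ C (!j))).Nonempty := by
    unfold Crosses
    rw [nested_iff']
    constructor
    · intro h i j
      by_contra hc
      push_neg at hc
      exact h ⟨i, j, (key i j).mp ⟨hc.1, hc.2.1, hc.2.2⟩⟩
    · intro h
      rintro ⟨i, j, hs⟩
      obtain ⟨e1, e2, e3⟩ := (key i j).mpr hs
      rcases h i j with hn | hn | hn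
      exacts [hn.ne_empty e1, hn.ne_empty e2, hn.ne_empty e3]
  have part2 : Crosses (A true, A false) (C true, C false) ↔
      ∀ i j : Bool,
        ((C true ∩ C false) \ A (!i)).Nonempty ∨
        ((A true ∩ A false) \ C (!j)).Nonempty ∨
        (edgesBetween G ((A true ∩ A false) ∩ (C true ∩ C false))
          ((A i \ A (!i)) ∩ (C j \ C (!j)))).Nonempty := by
    constructor
    · intro h i j
      by_contra hc
      push_neg at hc
      exact h (violIII_nested hG hA hC i j hc.1 hc.2.1 hc.2.2)
    · intro h
      apply part1.mpr
      intro i j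
      rcases h i j with hn | hn | hn
      · exact Or.inl hn
      · exact Or.inr (Or.inl hn)
      · obtain ⟨e, u, v, hadj, he, hu, hv⟩ := hn
        exact Or.inr (Or.inr ⟨v, hv⟩)
  refine ⟨part1, part2, fun i j => ?_⟩
  constructor
  · rintro ⟨hii, -⟩
    push_neg at hii
    exact (key i j).mp ⟨hii.1, hii.2.1, hii.2.2⟩
  · intro hs
    obtain ⟨e1, e2, e3⟩ := (key i j).mpr hs
    constructor
    · rintro (hn | hn | hn)
      exacts [hn.ne_empty e1, hn.ne_empty e2, hn.ne_empty e3]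
    · rintro (hn | hn | hn)
      · exact hn.ne_empty e1
      · exact hn.ne_empty e2
      · obtain ⟨e, u, v, hadj, he, hu, hv⟩ := hn
        rw [e3] at hv
        exact hv

end LS
end

section
/- Let {A,B} and {C,D} be crossing tight separations of a connected graph G, with separators X := A∩B and Y := C∩D. Assume that the X-link for C is empty while the Y-link for B is non-empty. Then the Y-link for A is empty while X∩Y is non-empty. -/
namespace LS

open SimpleGraph

variable {V : Type*}

/-! The first claim: the tight component of `G − Y` in `C` avoids `D ⊇ X`, so it lies on one
side of `{A,B}`; but it has neighbours in `Y ∖ A ⊆ B ∖ A` and, if `Y ∖ B ≠ ∅`, in `A ∖ B`.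
The second: if moreover `X ∩ Y = ∅`, the corner `(A ∖ B) ∩ (C ∖ D)` has no neighbours, so in a
connected graph it is empty, which nests the two separations. -/

namespace IsSep

variable {G : SimpleGraph V} {A B C D : Set V}

lemma symm (hAB : IsSep G A B) : IsSep G B A :=
  ⟨Set.union_comm A B ▸ hAB.1, fun b hb a ha hba => hAB.2 a ha b hb hba.symm⟩

lemma mem_right_of_notMem_left (hAB : IsSep G A B) {v : V} (hv : v ∉ A) : v ∈ B :=
  ((hAB.1 ▸ Set.mem_univ v : v ∈ A ∪ B)).resolve_left hv

lemma mem_left_of_adj (hAB : IsSep G A B) {a b : V} (ha : a ∈ A \ B) (hab : G.Adj a b) :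
    b ∈ A := by
  by_contra hb
  exact hAB.2 a ha b ⟨hAB.mem_right_of_notMem_left hb, hb⟩ hab

lemma inter_sep_nonempty_of_preconnected (hAB : IsSep G A B) {K : Set V}
    (hK : (G.induce K).Preconnected) {u v : V} (huK : u ∈ K) (huA : u ∈ A) (hvK : v ∈ K)
    (hvB : v ∈ B) : (K ∩ (A ∩ B)).Nonempty := by
  by_cases huB : u ∈ B
  · exact ⟨u, huK, huA, huB⟩
  obtain ⟨p⟩ := hK ⟨u, huK⟩ ⟨v, hvK⟩
  obtain ⟨d, -, hd_fst, hd_snd⟩ :=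
    p.exists_boundary_dart {x | x.1 ∈ A \ B} ⟨huA, huB⟩ fun h => h.2 hvB
  have hA : d.snd.1 ∈ A := hAB.mem_left_of_adj hd_fst d.adj
  exact ⟨d.snd.1, d.snd.2, hA, not_not.mp fun hB => hd_snd ⟨hA, hB⟩⟩

lemma mem_corner_sep_of_adj (hAB : IsSep G A B) (hCD : IsSep G C D) {a b : V}
    (ha : a ∈ (A \ B) ∩ (C \ D)) (hab : G.Adj a b) (hb : b ∉ (A \ B) ∩ (C \ D)) :
    b ∈ (A ∩ B) ∩ C ∪ (C ∩ D) ∩ A := by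
  have hbA := hAB.mem_left_of_adj ha.1 hab
  have hbC := hCD.mem_left_of_adj ha.2 hab
  by_cases hbB : b ∈ B
  · exact Or.inl ⟨⟨hbA, hbB⟩, hbC⟩
  · exact Or.inr ⟨⟨hbC, not_not.mp fun hbD => hb ⟨⟨hbA, hbB⟩, hbC, hbD⟩⟩, hbA⟩

lemma corner_eq_empty (hAB : IsSep G A B) (hCD : IsSep G C D) (hG : G.Preconnected)
    {y : V} (hy : y ∉ (A \ B) ∩ (C \ D)) (hXC : (A ∩ B) ∩ C = ∅) (hYA : (C ∩ D) ∩ A = ∅) :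
    (A \ B) ∩ (C \ D) = ∅ := by
  refine Set.eq_empty_iff_forall_notMem.mpr fun c hc => ?_
  obtain ⟨p⟩ := hG c y
  obtain ⟨d, -, hd_fst, hd_snd⟩ := p.exists_boundary_dart _ hc hy
  have := mem_corner_sep_of_adj hAB hCD hd_fst d.adj hd_snd
  rw [hXC, hYA, Set.empty_union] at this
  exact this

lemma sepGE_swap_of_corner_eq_empty (hAB : IsSep G A B) (hCD : IsSep G C D)
    (hXD : A ∩ B ⊆ D) (hYB : C ∩ D ⊆ B) (hcorner : (A \ B) ∩ (C \ D) = ∅) :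
    SepGE (A, B) (D, C) := by
  have hnot : ∀ v, v ∈ A \ B → v ∈ C \ D → False := fun v h₁ h₂ =>
    (Set.eq_empty_iff_forall_notMem.mp hcorner) v ⟨h₁, h₂⟩
  constructor
  · intro a ha
    by_contra haD
    exact hnot a ⟨ha, fun haB => haD (hXD ⟨ha, haB⟩)⟩ ⟨hCD.symm.mem_right_of_notMem_left haD, haD⟩
  · intro c hc
    by_contra hcB
    exact hnot c ⟨hAB.symm.mem_right_of_notMem_left hcB, hcB⟩ ⟨hc, fun hcD => hcB (hYB ⟨hc, hcD⟩)⟩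

lemma sep_subset_right_of_tightCompAt (hAB : IsSep G A B) {L : Set V}
    (hL : TightCompAt G L (C ∩ D)) (hLC : L ⊆ C) (hXD : A ∩ B ⊆ D)
    (hYlink : ((C ∩ D) \ A).Nonempty) : C ∩ D ⊆ B := by
  obtain ⟨⟨-, hLY, hLconn, -⟩, hLnbhd⟩ := hL
  obtain ⟨y, hyY, hyA⟩ := hYlink
  intro v hvY
  by_contra hvB
  obtain ⟨-, u, huL, huv⟩ : v ∈ nbhdSet G L := hLnbhd ▸ hvY
  obtain ⟨-, u', hu'L, hu'y⟩ : y ∈ nbhdSet G L := hLnbhd ▸ hyY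
  have hvA := hAB.symm.mem_right_of_notMem_left hvB
  have hyB := hAB.mem_right_of_notMem_left hyA
  have huA := hAB.mem_left_of_adj ⟨hvA, hvB⟩ huv.symm
  have hu'B := hAB.symm.mem_left_of_adj ⟨hyB, hyA⟩ hu'y.symm
  obtain ⟨x, hxL, hxX⟩ := hAB.inter_sep_nonempty_of_preconnected hLconn.preconnected huL huA
    hu'L hu'B
  exact hLY hxL ⟨hLC hxL, hXD hxX⟩

end IsSep

theorem statement1_general {V : Type*} (G : SimpleGraph V) (hG : G.Connected)
    (A B C D : Set V)
    (hAB : IsSep G A B) (hCD : IsSep G C D)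
    (htCD : TightSep G C D)
    (hcross : Crosses (A, B) (C, D))
    (hXlinkC : (A ∩ B) \ D = ∅)
    (hYlinkB : ((C ∩ D) \ A).Nonempty) :
    (C ∩ D) \ B = ∅ ∧ ((A ∩ B) ∩ (C ∩ D)).Nonempty := by
  have hXD : A ∩ B ⊆ D := Set.sdiff_eq_empty.mp hXlinkC
  obtain ⟨L, hL, hLC⟩ := htCD.1
  have hYB : C ∩ D ⊆ B := hAB.sep_subset_right_of_tightCompAt hL hLC hXD hYlinkB
  refine ⟨Set.sdiff_eq_empty.mpr hYB, Set.nonempty_iff_ne_empty.mpr fun hXY => ?_⟩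
  obtain ⟨y, -, hyA⟩ := hYlinkB
  have hXC : (A ∩ B) ∩ C = ∅ :=
    Set.subset_empty_iff.mp fun v hv => hXY ▸ ⟨hv.1, hv.2, hXD hv.1⟩
  have hYA : (C ∩ D) ∩ A = ∅ :=
    Set.subset_empty_iff.mp fun v hv => hXY ▸ ⟨⟨hv.2, hYB hv.1⟩, hv.1⟩
  have hcorner := hAB.corner_eq_empty hCD hG.preconnected (y := y)
    (fun h => hyA h.1.1) hXC hYA
  exact hcross (Or.inr (Or.inl (hAB.sepGE_swap_of_corner_eq_empty hCD hXD hYB hcorner)))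

/-- For crossing tight separations `{A,B}`, `{C,D}` with
separators `X = A ∩ B` and `Y = C ∩ D`: if the `X`-link for `C` (= `X ∖ D`)
is empty and the `Y`-link for `B` (= `Y ∖ A`) is non-empty, then the `Y`-link
for `A` (= `Y ∖ B`) is empty and the centre `X ∩ Y` is non-empty. -/
theorem statement1 {V : Type*} (G : SimpleGraph V) (hG : G.Connected)
    (A B C D : Set V)
    (hAB : IsSep G A B) (hCD : IsSep G C D)
    (htAB : TightSep G A B) (htCD : TightSep G C D)
    (hcross : Crosses (A, B) (C, D))
    (hXlinkC : (A ∩ B) \ D = ∅)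
    (hYlinkB : ((C ∩ D) \ A).Nonempty) :
    (C ∩ D) \ B = ∅ ∧ ((A ∩ B) ∩ (C ∩ D)).Nonempty :=
  statement1_general G hG A B C D hAB hCD htCD hcross hXlinkC hYlinkB

end LS
end

section
/- Let {A,B} and {C,D} be two crossing tight separations of a connected graph G. Then the two corners (B∩C, A∪D) and (B∩D, A∪C) on the B-side together with (A,B) form a relevant ⊤-star of G with base {A,B}. -/
namespace LS

open SimpleGraph

variable {V : Type*}

/-! ### Auxiliary lemmas for Statement 2 -/

section Aux

variable {G : SimpleGraph V}

lemma walk_pred_supp {S : Set V} {P : V → Prop}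
    (hstep : ∀ a ∈ S, ∀ b ∈ S, G.Adj a b → P a → P b) :
    ∀ {a b : V} (W : G.Walk a b), (∀ w ∈ W.support, w ∈ S) → P a → P b := by
  intro a b W
  induction W with
  | nil => exact fun _ h => h
  | @cons u c b h W ih =>
    intro hsupp hPa
    have hu : u ∈ S := hsupp _ (by simp)
    have hc : c ∈ S := hsupp _ (by simp)
    exact ih (fun w hw => hsupp w (by simp [hw])) (hstep u hu c hc h hPa)

lemma clopen_univ (hG : G.Connected) {M : Set V} (hne : M.Nonempty)
    (hcl : ∀ a ∈ M, ∀ b : V, G.Adj a b → b ∈ M) : ∀ v : V, v ∈ M := by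
  obtain ⟨a, ha⟩ := hne
  intro v
  obtain ⟨W⟩ := hG.preconnected a v
  exact walk_pred_supp (S := Set.univ)
    (fun a _ b _ hab hma => hcl a hma b hab) W (fun _ _ => trivial) ha

/-- The vertex set of the component of `G[S]` containing `u`. -/
def compIn (G : SimpleGraph V) (S : Set V) (u : V) : Set V :=
  {v | v ∈ S ∧ ∃ W : G.Walk u v, ∀ w ∈ W.support, w ∈ S}

lemma compIn_self {S : Set V} {u : V} (hu : u ∈ S) : u ∈ compIn G S u :=
  ⟨hu, SimpleGraph.Walk.nil, by simp [hu]⟩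

lemma compIn_subset {S : Set V} {u : V} : compIn G S u ⊆ S := fun _ hv => hv.1

lemma compIn_closed {S : Set V} {u v b : V} (hv : v ∈ compIn G S u) (hb : b ∈ S)
    (hadj : G.Adj v b) : b ∈ compIn G S u := by
  obtain ⟨hvS, W, hW⟩ := hv
  refine ⟨hb, W.concat hadj, ?_⟩
  intro w hw
  rw [SimpleGraph.Walk.support_concat] at hw
  simp only [List.concat_eq_append, List.mem_append, List.mem_singleton] at hw
  rcases hw with hw | hw
  · exact hW w hw
  · subst hw; exact hb

lemma compIn_pred {S : Set V} {u : V} {P : V → Prop}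
    (hstep : ∀ a ∈ S, ∀ b ∈ S, G.Adj a b → P a → P b) (hu : P u) :
    ∀ v ∈ compIn G S u, P v := by
  intro v hv
  obtain ⟨hvS, W, hW⟩ := hv
  exact walk_pred_supp hstep W hW hu

lemma reach_induce {K : Set V} :
    ∀ {a b : V} (W : G.Walk a b), (∀ w ∈ W.support, w ∈ K) →
      ∀ (ha : a ∈ K) (hb : b ∈ K), (G.induce K).Reachable ⟨a, ha⟩ ⟨b, hb⟩ := by
  intro a b W
  induction W with
  | nil => intro _ ha hb; exact SimpleGraph.Reachable.refl _
  | @cons u c b h W ih =>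
    intro hsupp hu hb
    have hc : c ∈ K := hsupp _ (by simp)
    have hadj : (G.induce K).Adj ⟨u, hu⟩ ⟨c, hc⟩ := by simpa using h
    exact hadj.reachable.trans (ih (fun w hw => hsupp w (by simp [hw])) hc hb)

lemma compIn_isCompOf {S : Set V} {u : V} (hu : u ∈ S) :
    IsCompOf G (compIn G S u) S := by
  classical
  refine ⟨⟨u, compIn_self hu⟩, compIn_subset, ?_, ?_⟩
  · rw [SimpleGraph.connected_iff]
    constructor
    · rintro ⟨v, hv⟩ ⟨w, hw⟩
      -- build a walk from u to v whose support lies in compIn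
      have key : ∀ z (hz : z ∈ compIn G S u),
          (G.induce (compIn G S u)).Reachable ⟨u, compIn_self hu⟩ ⟨z, hz⟩ := by
        intro z hz
        obtain ⟨hzS, W, hW⟩ := hz
        refine reach_induce W ?_ (compIn_self hu) ⟨hzS, W, hW⟩
        intro x hx
        refine ⟨hW x hx, W.takeUntil x hx, ?_⟩
        intro y hy
        exact hW y (SimpleGraph.Walk.support_takeUntil_subset W hx hy)
      exact (key v hv).symm.trans (key w hw)
    · exact ⟨⟨u, compIn_self hu⟩⟩
  · intro a ha b hb hadj
    exact compIn_closed ha hb hadj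

lemma induce_walk_pred {K : Set V} {P : V → Prop}
    (hstep : ∀ a ∈ K, ∀ b ∈ K, G.Adj a b → P a → P b) :
    ∀ {x y : ↥K} (_W : (G.induce K).Walk x y), P x.val → P y.val := by
  intro x y W
  induction W with
  | nil => exact id
  | @cons x c y h W ih =>
    intro hP
    exact ih (hstep x.val x.2 c.val c.2 (by simpa using h) hP)

lemma comp_pred {K S : Set V} (h : IsCompOf G K S) {P : V → Prop}
    (hstep : ∀ a ∈ K, ∀ b ∈ K, G.Adj a b → P a → P b)
    {v w : V} (hv : v ∈ K) (hw : w ∈ K) (hPv : P v) : P w := by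
  obtain ⟨_, hKS, hconn, _⟩ := h
  obtain ⟨W⟩ := hconn.preconnected ⟨v, hv⟩ ⟨w, hw⟩
  exact induce_walk_pred hstep W hPv

lemma IsSep.symm' {A B : Set V} (h : IsSep G A B) : IsSep G B A :=
  ⟨by rw [Set.union_comm]; exact h.1, fun b hb a ha hadj => h.2 a ha b hb hadj.symm⟩

lemma corner_sep {A B C D : Set V} (hAB : IsSep G A B) (hCD : IsSep G C D) :
    IsSep G (B ∩ C) (A ∪ D) := by
  have hABu : ∀ v : V, v ∈ A ∨ v ∈ B := fun v => by
    have : v ∈ A ∪ B := hAB.1.symm ▸ Set.mem_univ v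
    exact this
  have hCDu : ∀ v : V, v ∈ C ∨ v ∈ D := fun v => by
    have : v ∈ C ∪ D := hCD.1.symm ▸ Set.mem_univ v
    exact this
  constructor
  · ext v
    simp only [Set.mem_union, Set.mem_inter_iff, Set.mem_univ, iff_true]
    have := hABu v; have := hCDu v; tauto
  · rintro u ⟨⟨huB, huC⟩, hu2⟩ w ⟨hw1, hw2⟩ hadj
    simp only [Set.mem_union, not_or] at hu2
    obtain ⟨huA, huD⟩ := hu2
    simp only [Set.mem_inter_iff, not_and] at hw2
    rcases hw1 with hwA | hwD
    · by_cases hwB : w ∈ B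
      · have hwC : w ∉ C := hw2 hwB
        have hwD : w ∈ D := (hCDu w).resolve_left hwC
        exact hCD.2 u ⟨huC, huD⟩ w ⟨hwD, hwC⟩ hadj
      · exact hAB.2 w ⟨hwA, hwB⟩ u ⟨huB, huA⟩ hadj.symm
    · by_cases hwC : w ∈ C
      · have hwB : w ∉ B := fun h => hw2 h hwC
        have hwA : w ∈ A := (hABu w).resolve_right hwB
        exact hAB.2 w ⟨hwA, hwB⟩ u ⟨huB, huA⟩ hadj.symm
      · exact hCD.2 u ⟨huC, huD⟩ w ⟨hwD, hwC⟩ hadj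

lemma inner_nested (hG : G.Connected) {A B C D : Set V}
    (hAB : IsSep G A B) (hCD : IsSep G C D)
    (hz : (A ∩ B).Nonempty)
    (hABC : A ∩ B ⊆ C \ D) (hCDB : C ∩ D ⊆ B \ A) :
    A ⊆ C ∧ D ⊆ B := by
  have hABu : ∀ v : V, v ∈ A ∨ v ∈ B := fun v => (hAB.1.symm ▸ Set.mem_univ v : v ∈ A ∪ B)
  have hCDu : ∀ v : V, v ∈ C ∨ v ∈ D := fun v => (hCD.1.symm ▸ Set.mem_univ v : v ∈ C ∪ D)
  have hAC : A ⊆ C := by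
    intro a ha
    by_contra haC
    have haD : a ∈ D := (hCDu a).resolve_left haC
    have haB : a ∉ B := fun hB => haC (hABC ⟨ha, hB⟩).1
    -- component of a in G - (A∩B)
    set M := compIn G ((A ∩ B)ᶜ) a with hM
    have haM : a ∈ M := compIn_self (by simp [haB])
    have hMside : ∀ v ∈ M, (v ∈ A ∧ v ∉ B) ∧ (v ∈ D ∧ v ∉ C) := by
      refine compIn_pred ?_ ⟨⟨ha, haB⟩, ⟨haD, haC⟩⟩
      rintro p hp q hq hadj ⟨⟨hpA, hpB⟩, hpD, hpC⟩
      have hqA : q ∈ A := by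
        rcases hABu q with h | h
        · exact h
        · by_cases hqA : q ∈ A
          · exact hqA
          · exact absurd hadj (hAB.2 p ⟨hpA, hpB⟩ q ⟨h, hqA⟩)
      have hqB : q ∉ B := fun h => hq ⟨hqA, h⟩
      have hqC : q ∉ C := by
        intro hqC
        by_cases hqD : q ∈ D
        · exact ((hCDB ⟨hqC, hqD⟩).2) hqA
        · exact hCD.2 q ⟨hqC, hqD⟩ p ⟨hpD, hpC⟩ hadj.symm
      exact ⟨⟨hqA, hqB⟩, (hCDu q).resolve_left hqC, hqC⟩
    have hclopen : ∀ p ∈ M, ∀ q : V, G.Adj p q → q ∈ M := by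
      intro p hp q hadj
      have hpside := hMside p hp
      have hq : q ∈ (A ∩ B)ᶜ := by
        intro hqAB
        have := hABC hqAB
        exact hCD.2 q ⟨this.1, this.2⟩ p ⟨hpside.2.1, hpside.2.2⟩ hadj.symm
      exact compIn_closed hp hq hadj
    obtain ⟨z, hzA, hzB⟩ := hz
    have := clopen_univ hG ⟨a, haM⟩ hclopen z
    exact (hMside z this).1.2 hzB
  have hDB : D ⊆ B := by
    intro v hv
    by_contra hvB
    have hvA : v ∈ A := (hABu v).resolve_right hvB
    exact (hCDB ⟨hAC hvA, hv⟩).2 hvA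
  exact ⟨hAC, hDB⟩

lemma key_lemma (hG : G.Connected) {A B C D : Set V}
    (hAB : IsSep G A B) (hCD : IsSep G C D)
    (htAB : TightSep G A B)
    (hKC : ∃ K, TightCompAt G K (C ∩ D) ∧ K ⊆ C)
    (hcross : Crosses (A, B) (C, D))
    {x : V} (hxB : x ∈ B) (hxC : x ∈ C) (hxD : x ∈ D) (hxA : x ∉ A) :
    (∃ y ∈ (A ∩ B ∩ C) \ D, G.Adj x y) ∨
    ∃ y ∈ A ∩ B ∩ C, ∃ K, IsCompOf G K ((B ∩ C) \ (A ∪ D)) ∧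
      x ∈ nbhdSet G K ∧ y ∈ nbhdSet G K := by
  have hABu : ∀ v : V, v ∈ A ∨ v ∈ B := fun v => (hAB.1.symm ▸ Set.mem_univ v : v ∈ A ∪ B)
  have hCDu : ∀ v : V, v ∈ C ∨ v ∈ D := fun v => (hCD.1.symm ▸ Set.mem_univ v : v ∈ C ∪ D)
  obtain ⟨KC, ⟨hKCcomp, hKCnb⟩, hKCC⟩ := hKC
  have hxnb : x ∈ nbhdSet G KC := by rw [hKCnb]; exact ⟨hxC, hxD⟩
  obtain ⟨hxKC, u, huKC, hux⟩ := hxnb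
  have huC : u ∈ C := hKCC huKC
  have huCD : u ∉ C ∩ D := hKCcomp.2.1 huKC
  have huD : u ∉ D := fun h => huCD ⟨huC, h⟩
  by_cases huA : u ∈ A
  · -- direct edge to the link
    have huB : u ∈ B := by
      by_contra huB
      exact hAB.2 u ⟨huA, huB⟩ x ⟨hxB, hxA⟩ hux
    exact Or.inl ⟨u, ⟨⟨⟨huA, huB⟩, huC⟩, huD⟩, hux.symm⟩
  · have huB : u ∈ B := (hABu u).resolve_left huA
    set S₁ := (B ∩ C) \ (A ∪ D) with hS₁
    have huS : u ∈ S₁ := ⟨⟨huB, huC⟩, by simp [huA, huD]⟩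
    set K := compIn G S₁ u with hK
    have hKcomp : IsCompOf G K S₁ := compIn_isCompOf huS
    have hKS : K ⊆ S₁ := compIn_subset
    have hxK : x ∉ K := fun h => (hKS h).2 (Or.inr hxD)
    have hxnbK : x ∈ nbhdSet G K := ⟨hxK, u, compIn_self huS, hux⟩
    by_cases hy : ∃ y ∈ A ∩ B ∩ C, y ∈ nbhdSet G K
    · obtain ⟨y, hy1, hy2⟩ := hy
      exact Or.inr ⟨y, hy1, K, hKcomp, hxnbK, hy2⟩
    exfalso
    push_neg at hy
    -- every neighbour of K outside K lies in C ∩ D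
    have hclaim : ∀ a ∈ K, ∀ b : V, G.Adj a b → b ∈ K ∨ b ∈ C ∩ D := by
      intro a haK b hab
      by_cases hbK : b ∈ K
      · exact Or.inl hbK
      have haS : a ∈ S₁ := hKS haK
      simp only [hS₁, Set.mem_diff, Set.mem_inter_iff, Set.mem_union, not_or] at haS
      obtain ⟨⟨haB, haC⟩, haA, haD⟩ := haS
      have hbnb : b ∈ nbhdSet G K := ⟨hbK, a, haK, hab⟩
      have hbC : b ∈ C := by
        by_contra hbC
        have hbD : b ∈ D := (hCDu b).resolve_left hbC
        exact hCD.2 a ⟨haC, haD⟩ b ⟨hbD, hbC⟩ hab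
      have hbA : b ∉ A := by
        intro hbA
        have hbB : b ∈ B := by
          by_contra hbB
          exact hAB.2 b ⟨hbA, hbB⟩ a ⟨haB, haA⟩ hab.symm
        exact hy b ⟨⟨hbA, hbB⟩, hbC⟩ hbnb
      have hbB : b ∈ B := (hABu b).resolve_left hbA
      by_cases hbD : b ∈ D
      · exact Or.inr ⟨hbC, hbD⟩
      · exact absurd (compIn_closed haK ⟨⟨hbB, hbC⟩, by simp [hbA, hbD]⟩ hab) hbK
    -- K = KC
    have hKsub : K ⊆ KC := by
      refine compIn_pred ?_ huKC
      intro a haS b hbS hab haKC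
      refine hKCcomp.2.2.2 a haKC b ?_ hab
      intro hbCD
      exact hbS.2 (Or.inr hbCD.2)
    have hKCsub : KC ⊆ K := by
      intro v hv
      refine comp_pred hKCcomp ?_ huKC hv (compIn_self huS)
      intro a haKC b hbKC hab haK
      rcases hclaim a haK b hab with h | h
      · exact h
      · exact absurd h (hKCcomp.2.1 hbKC)
    have hKeq : K = KC := Set.Subset.antisymm hKsub hKCsub
    -- C ∩ D ⊆ B \ A
    have hCDBA : C ∩ D ⊆ B \ A := by
      intro v hv
      have hvnb : v ∈ nbhdSet G K := by rw [hKeq, hKCnb]; exact hv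
      obtain ⟨hvK, w, hwK, hwv⟩ := hvnb
      have hwS := hKS hwK
      simp only [hS₁, Set.mem_diff, Set.mem_inter_iff, Set.mem_union, not_or] at hwS
      obtain ⟨⟨hwB, hwC⟩, hwA, hwD⟩ := hwS
      have hvA : v ∉ A := by
        intro hvA
        by_cases hvB : v ∈ B
        · exact hy v ⟨⟨hvA, hvB⟩, hv.1⟩ ⟨hvK, w, hwK, hwv⟩
        · exact hAB.2 v ⟨hvA, hvB⟩ w ⟨hwB, hwA⟩ hwv.symm
      exact ⟨(hABu v).resolve_left hvA, hvA⟩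
    -- A ∩ B is nonempty
    have hz : (A ∩ B).Nonempty := by
      rw [Set.nonempty_iff_ne_empty]
      intro hABe
      have hBuniv : ∀ v : V, v ∈ B := by
        refine clopen_univ hG ⟨u, huB⟩ ?_
        intro a ha b hadj
        have haA : a ∉ A := fun h => (Set.eq_empty_iff_forall_notMem.mp hABe a) ⟨h, ha⟩
        by_contra hbB
        have hbA : b ∈ A := (hABu b).resolve_right hbB
        exact hAB.2 b ⟨hbA, hbB⟩ a ⟨ha, haA⟩ hadj.symm
      refine hcross (Or.inl ⟨?_, fun v _ => hBuniv v⟩)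
      intro v hv
      exact absurd ⟨hv, hBuniv v⟩ (Set.eq_empty_iff_forall_notMem.mp hABe v)
    -- tight component of {A,B} inside A
    obtain ⟨L, ⟨hLcomp, hLnb⟩, hLA⟩ := htAB.1
    have hLAB : ∀ v ∈ L, v ∈ A ∧ v ∉ B := fun v hv =>
      ⟨hLA hv, fun hvB => hLcomp.2.1 hv ⟨hLA hv, hvB⟩⟩
    obtain ⟨l0, hl0⟩ := hLcomp.1
    have hLnotCD : ∀ v ∈ L, v ∉ C ∩ D := fun v hv h => (hCDBA h).2 (hLAB v hv).1
    -- all of L lies on one side of {C, D}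
    have hstepL : ∀ a ∈ L, ∀ b ∈ L, G.Adj a b → (a ∈ C ∧ a ∉ D) → (b ∈ C ∧ b ∉ D) := by
      intro a ha b hb hab ⟨haC, haD⟩
      have hbCD := hLnotCD b hb
      by_cases hbC : b ∈ C
      · exact ⟨hbC, fun h => hbCD ⟨hbC, h⟩⟩
      · have hbD : b ∈ D := (hCDu b).resolve_left hbC
        exact absurd hab (hCD.2 a ⟨haC, haD⟩ b ⟨hbD, hbC⟩)
    have hstepL' : ∀ a ∈ L, ∀ b ∈ L, G.Adj a b → (a ∈ D ∧ a ∉ C) → (b ∈ D ∧ b ∉ C) := by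
      intro a ha b hb hab ⟨haD, haC⟩
      have hbCD := hLnotCD b hb
      by_cases hbD : b ∈ D
      · exact ⟨hbD, fun h => hbCD ⟨h, hbD⟩⟩
      · have hbC : b ∈ C := (hCDu b).resolve_right hbD
        exact absurd hab.symm (hCD.2 b ⟨hbC, hbD⟩ a ⟨haD, haC⟩)
    -- neighbourhood of L is A ∩ B
    have hnbL : ∀ v ∈ A ∩ B, ∃ w ∈ L, G.Adj w v := by
      intro v hv
      have : v ∈ nbhdSet G L := hLnb ▸ hv
      obtain ⟨_, w, hw, hwv⟩ := this
      exact ⟨w, hw, hwv⟩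
    by_cases hl0C : l0 ∈ C
    · have hl0D : l0 ∉ D := fun h => hLnotCD l0 hl0 ⟨hl0C, h⟩
      have hLC : ∀ v ∈ L, v ∈ C ∧ v ∉ D := fun v hv =>
        comp_pred hLcomp hstepL hl0 hv ⟨hl0C, hl0D⟩
      have hABC : A ∩ B ⊆ C \ D := by
        intro v hv
        obtain ⟨w, hw, hwv⟩ := hnbL v hv
        have hwC := hLC w hw
        have hvC : v ∈ C := by
          by_contra hvC
          have hvD : v ∈ D := (hCDu v).resolve_left hvC
          exact hCD.2 w ⟨hwC.1, hwC.2⟩ v ⟨hvD, hvC⟩ hwv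
        exact ⟨hvC, fun hvD => (hCDBA ⟨hvC, hvD⟩).2 hv.1⟩
      obtain ⟨hAC, hDB⟩ := inner_nested hG hAB hCD hz hABC hCDBA
      exact hcross (Or.inl ⟨hAC, hDB⟩)
    · have hl0D : l0 ∈ D := (hCDu l0).resolve_left hl0C
      have hLD : ∀ v ∈ L, v ∈ D ∧ v ∉ C := fun v hv =>
        comp_pred hLcomp hstepL' hl0 hv ⟨hl0D, hl0C⟩
      have hABD : A ∩ B ⊆ D \ C := by
        intro v hv
        obtain ⟨w, hw, hwv⟩ := hnbL v hv
        have hwD := hLD w hw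
        have hvD : v ∈ D := by
          by_contra hvD
          have hvC : v ∈ C := (hCDu v).resolve_right hvD
          exact hCD.2 v ⟨hvC, hvD⟩ w ⟨hwD.1, hwD.2⟩ hwv.symm
        exact ⟨hvD, fun hvC => (hCDBA ⟨hvC, hvD⟩).2 hv.1⟩
      obtain ⟨hAD, hCB⟩ := inner_nested hG hAB hCD.symm' hz hABD
        (by rw [Set.inter_comm]; exact hCDBA)
      exact hcross (Or.inr (Or.inl ⟨hAD, hCB⟩))

end Aux

set_option maxHeartbeats 1000000 in
/-- For crossing tight separations `{A,B}` and `{C,D}` of a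
connected graph, the two corners `(B ∩ C, A ∪ D)` and `(B ∩ D, A ∪ C)` on the
`B`-side together with `(A,B)` form a relevant ⊤-star with base `{A,B}`. -/
theorem statement2 {V : Type*} (G : SimpleGraph V) (hG : G.Connected)
    (A B C D : Set V)
    (hAB : IsSep G A B) (hCD : IsSep G C D)
    (htAB : TightSep G A B) (htCD : TightSep G C D)
    (hcross : Crosses (A, B) (C, D)) :
    RelevantTStar G ![(A, B), (B ∩ C, A ∪ D), (B ∩ D, A ∪ C)] := by
  classical
  have hABu : ∀ v : V, v ∈ A ∨ v ∈ B := fun v => (hAB.1.symm ▸ Set.mem_univ v : v ∈ A ∪ B)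
  have hCDu : ∀ v : V, v ∈ C ∨ v ∈ D := fun v => (hCD.1.symm ▸ Set.mem_univ v : v ∈ C ∪ D)
  have hUnion3 : ∀ (f : Fin 3 → Set V), (⋃ i, f i) = f 0 ∪ f 1 ∪ f 2 := by
    intro f; ext v
    simp only [Set.mem_iUnion, Set.mem_union]
    constructor
    · rintro ⟨i, hi⟩
      fin_cases i
      · exact Or.inl (Or.inl hi)
      · exact Or.inl (Or.inr hi)
      · exact Or.inr hi
    · rintro ((h | h) | h)
      exacts [⟨0, h⟩, ⟨1, h⟩, ⟨2, h⟩]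
  have hInter3 : ∀ (f : Fin 3 → Set V), (⋂ i, f i) = f 0 ∩ f 1 ∩ f 2 := by
    intro f; ext v
    simp only [Set.mem_iInter, Set.mem_inter_iff]
    constructor
    · intro h; exact ⟨⟨h 0, h 1⟩, h 2⟩
    · rintro ⟨⟨h0, h1⟩, h2⟩ i
      fin_cases i <;> assumption
  have hne01 : ((A, B) : Set V × Set V) ≠ (B ∩ C, A ∪ D) := by
    intro h
    rw [Prod.mk.injEq] at h
    refine hcross (Or.inl ⟨?_, ?_⟩)
    · show A ⊆ C
      rw [h.1]; exact Set.inter_subset_right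
    · show D ⊆ B
      rw [h.2]; exact Set.subset_union_right
  have hne02 : ((A, B) : Set V × Set V) ≠ (B ∩ D, A ∪ C) := by
    intro h
    rw [Prod.mk.injEq] at h
    refine hcross (Or.inr (Or.inl ⟨?_, ?_⟩))
    · show A ⊆ D
      rw [h.1]; exact Set.inter_subset_right
    · show C ⊆ B
      rw [h.2]; exact Set.subset_union_right
  have hne12 : ((B ∩ C, A ∪ D) : Set V × Set V) ≠ (B ∩ D, A ∪ C) := by
    intro h
    rw [Prod.mk.injEq] at h
    obtain ⟨h1, h2⟩ := h
    have hCDAB : ∀ v : V, (v ∈ C ∧ v ∉ D) ∨ (v ∈ D ∧ v ∉ C) → v ∈ A ∧ v ∉ B := by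
      intro v hv
      rcases hv with ⟨hvC, hvD⟩ | ⟨hvD, hvC⟩
      · have hvA : v ∈ A := by
          have hv2 : v ∈ A ∪ C := Or.inr hvC
          rw [← h2] at hv2
          exact hv2.resolve_right hvD
        refine ⟨hvA, fun hvB => hvD ?_⟩
        have hv1 : v ∈ B ∩ C := ⟨hvB, hvC⟩
        rw [h1] at hv1
        exact hv1.2
      · have hvA : v ∈ A := by
          have hv2 : v ∈ A ∪ D := Or.inr hvD
          rw [h2] at hv2
          exact hv2.resolve_right hvC
        refine ⟨hvA, fun hvB => hvC ?_⟩
        have hv1 : v ∈ B ∩ D := ⟨hvB, hvD⟩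
        rw [← h1] at hv1
        exact hv1.2
    obtain ⟨KC, ⟨hKCcomp, hKCnb⟩, hKCC⟩ := htCD.1
    have hKCAB : ∀ v ∈ KC, v ∈ A ∧ v ∉ B := fun v hv =>
      hCDAB v (Or.inl ⟨hKCC hv, fun h => hKCcomp.2.1 hv ⟨hKCC hv, h⟩⟩)
    have hCDA : C ∩ D ⊆ A := by
      intro v hv
      have hv' : v ∈ nbhdSet G KC := by rw [hKCnb]; exact hv
      obtain ⟨hvK, w, hw, hwv⟩ := hv'
      have hwAB := hKCAB w hw
      by_contra hvA
      exact hAB.2 w ⟨hwAB.1, hwAB.2⟩ v ⟨(hABu v).resolve_left hvA, hvA⟩ hwv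
    refine hcross (Or.inr (Or.inr (Or.inl ⟨?_, ?_⟩)))
    · show B ⊆ C
      intro v hv
      by_cases hvC : v ∈ C
      · exact hvC
      · exact absurd hv (hCDAB v (Or.inr ⟨(hCDu v).resolve_left hvC, hvC⟩)).2
    · show D ⊆ A
      intro v hv
      by_cases hvC : v ∈ C
      · exact hCDA ⟨hvC, hv⟩
      · exact (hCDAB v (Or.inr ⟨hv, hvC⟩)).1
  have hd01 : Disjoint (A \ B) ((B ∩ C) \ (A ∪ D)) :=
    Set.disjoint_left.mpr fun v hv h => h.2 (Or.inl hv.1)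
  have hd02 : Disjoint (A \ B) ((B ∩ D) \ (A ∪ C)) :=
    Set.disjoint_left.mpr fun v hv h => h.2 (Or.inl hv.1)
  have hd12 : Disjoint ((B ∩ C) \ (A ∪ D)) ((B ∩ D) \ (A ∪ C)) :=
    Set.disjoint_left.mpr fun v hv h => h.2 (Or.inr hv.1.2)
  refine ⟨⟨?_, ?_, ?_, ?_, ?_⟩, htAB, ?_⟩
  · -- injectivity
    intro i j hij
    fin_cases i <;> fin_cases j <;>
      first
        | rfl
        | exact absurd hij hne01
        | exact absurd hij.symm hne01
        | exact absurd hij hne02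
        | exact absurd hij.symm hne02
        | exact absurd hij hne12
        | exact absurd hij.symm hne12
  · -- each is a separation
    intro i
    fin_cases i
    · exact hAB
    · exact corner_sep hAB hCD
    · exact corner_sep hAB hCD.symm'
  · -- disjoint interiors
    intro i j hij
    fin_cases i <;> fin_cases j <;>
      first
        | exact absurd rfl hij
        | exact hd01
        | exact hd01.symm
        | exact hd02
        | exact hd02.symm
        | exact hd12
        | exact hd12.symm
  · -- the interiors partition the complement of the separators
    simp only [hUnion3, tsSep, Matrix.cons_val_zero, Matrix.cons_val_one, Matrix.cons_val_two,
      Matrix.head_cons, Matrix.tail_cons]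
    ext v
    have h1 := hABu v
    have h2 := hCDu v
    simp only [Set.mem_union, Set.mem_compl_iff, Set.mem_diff, Set.mem_inter_iff]
    tauto
  · -- every separator vertex lies in another separator
    intro i v hv
    fin_cases i
    · have hv' : v ∈ A ∩ B := hv
      rcases hCDu v with h | h
      · exact ⟨1, by decide, ⟨⟨hv'.2, h⟩, Or.inl hv'.1⟩⟩
      · exact ⟨2, by decide, ⟨⟨hv'.2, h⟩, Or.inl hv'.1⟩⟩
    · have hv' : v ∈ (B ∩ C) ∩ (A ∪ D) := hv
      rcases hv'.2 with h | h
      · exact ⟨0, by decide, h, hv'.1.1⟩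
      · exact ⟨2, by decide, ⟨hv'.1.1, h⟩, Or.inr hv'.1.2⟩
    · have hv' : v ∈ (B ∩ D) ∩ (A ∪ C) := hv
      rcases hv'.2 with h | h
      · exact ⟨0, by decide, h, hv'.1.1⟩
      · exact ⟨1, by decide, ⟨hv'.1.1, h⟩, Or.inr hv'.1.2⟩
  · -- relevance condition
    intro x hx i hi
    have hcen : tsCentre ![(A, B), (B ∩ C, A ∪ D), (B ∩ D, A ∪ C)] = A ∩ B ∩ C ∩ D := by
      rw [tsCentre, hInter3]
      ext v
      simp only [tsSep, Matrix.cons_val_zero, Matrix.cons_val_one, Matrix.cons_val_two,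
        Matrix.head_cons, Matrix.tail_cons, Set.mem_inter_iff, Set.mem_union]
      tauto
    have hx' : x ∈ B ∧ x ∈ C ∧ x ∈ D ∧ x ∉ A := by
      rw [tsLink, hcen] at hx
      have hx1 := hx.1
      have hx2 := hx.2
      have hs1 : x ∈ tsSep (![(A, B), (B ∩ C, A ∪ D), (B ∩ D, A ∪ C)] 1) := hx1.1
      have hs2 : x ∈ tsSep (![(A, B), (B ∩ C, A ∪ D), (B ∩ D, A ∪ C)] 2) := hx1.2
      have hs1' : x ∈ (B ∩ C) ∩ (A ∪ D) := hs1
      have hs2' : x ∈ (B ∩ D) ∩ (A ∪ C) := hs2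
      have hxnc : x ∉ A ∩ B ∩ C ∩ D := hx2
      refine ⟨hs1'.1.1, hs1'.1.2, hs2'.1.2, fun hxA => ?_⟩
      exact hxnc ⟨⟨⟨hxA, hs1'.1.1⟩, hs1'.1.2⟩, hs2'.1.2⟩
    obtain ⟨hxB, hxC, hxD, hxA⟩ := hx'
    have hl01 : tsLink ![(A, B), (B ∩ C, A ∪ D), (B ∩ D, A ∪ C)] 0 1 = (A ∩ B ∩ C) \ D := by
      rw [tsLink, hcen]
      ext v
      have hs0 : tsSep (![(A, B), (B ∩ C, A ∪ D), (B ∩ D, A ∪ C)] 0) = A ∩ B := rfl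
      have hs1 : tsSep (![(A, B), (B ∩ C, A ∪ D), (B ∩ D, A ∪ C)] 1) = (B ∩ C) ∩ (A ∪ D) := rfl
      rw [hs0, hs1]
      simp only [Set.mem_diff, Set.mem_inter_iff, Set.mem_union]
      tauto
    have hl02 : tsLink ![(A, B), (B ∩ C, A ∪ D), (B ∩ D, A ∪ C)] 0 2 = (A ∩ B ∩ D) \ C := by
      rw [tsLink, hcen]
      ext v
      have hs0 : tsSep (![(A, B), (B ∩ C, A ∪ D), (B ∩ D, A ∪ C)] 0) = A ∩ B := rfl
      have hs2 : tsSep (![(A, B), (B ∩ C, A ∪ D), (B ∩ D, A ∪ C)] 2) = (B ∩ D) ∩ (A ∪ C) := rfl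
      rw [hs0, hs2]
      simp only [Set.mem_diff, Set.mem_inter_iff, Set.mem_union]
      tauto
    have hl01c : tsLink ![(A, B), (B ∩ C, A ∪ D), (B ∩ D, A ∪ C)] 0 1 ∪
        tsCentre ![(A, B), (B ∩ C, A ∪ D), (B ∩ D, A ∪ C)] = A ∩ B ∩ C := by
      rw [hl01, hcen]
      ext v
      simp only [Set.mem_union, Set.mem_diff, Set.mem_inter_iff]
      tauto
    have hl02c : tsLink ![(A, B), (B ∩ C, A ∪ D), (B ∩ D, A ∪ C)] 0 2 ∪
        tsCentre ![(A, B), (B ∩ C, A ∪ D), (B ∩ D, A ∪ C)] = A ∩ B ∩ D := by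
      rw [hl02, hcen]
      ext v
      simp only [Set.mem_union, Set.mem_diff, Set.mem_inter_iff]
      tauto
    have h3 : i = 0 ∨ i = 1 ∨ i = 2 := by fin_cases i <;> simp
    rcases h3 with rfl | rfl | rfl
    · exact absurd rfl hi
    · rw [hl01c, hl01]
      exact key_lemma hG hAB hCD htAB htCD.1 hcross hxB hxC hxD hxA
    · rw [hl02c, hl02]
      have hcross' : Crosses (A, B) (D, C) := by
        intro h
        refine hcross ?_
        rcases h with h | h | h | h
        · exact Or.inr (Or.inl h)
        · exact Or.inl h
        · exact Or.inr (Or.inr (Or.inr h))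
        · exact Or.inr (Or.inr (Or.inl h))
      have htD : ∃ K, TightCompAt G K (D ∩ C) ∧ K ⊆ D := by
        rw [Set.inter_comm]
        exact htCD.2
      exact key_lemma hG hAB hCD.symm' htAB htD hcross' hxB hxD hxC hxA

end LS
end
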